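/- For all NLPs P_1 and P_2, if P_1 ↦_UTPM P_2 then the associated SETAFs coincide: 𝔄_{P_1} = 𝔄_{P_2}. -/
import Mathlib


/-- A rule of a normal logic program:
`head ← bodyPos, not bodyNeg`. -/
structure Rule (α : Type) where
  head : α
  bodyPos : Finset α
  bodyNeg : Finset α
deriving DecidableEq

/-- A normal logic program (NLP): a finite set of rules. -/
abbrev NLP (α : Type) := Finset (Rule α)

variable {α : Type} [DecidableEq α]

/-- The atoms occurring in a rule. -/
def Rule.atoms (r : Rule α) : Finset α :=
  insert r.head (r.bodyPos ∪ r.bodyNeg)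

/-- The Herbrand base of a program: all atoms occurring in it. -/
def HB (P : NLP α) : Finset α := P.sup Rule.atoms

/-- A three-valued interpretation, given by its sets of true and false atoms. -/
structure Interp (α : Type) where
  T : Set α
  F : Set α

/-- `I` is a 3-valued interpretation over the Herbrand base `H`. -/
def IsInterp (H : Finset α) (I : Interp α) : Prop :=
  I.T ⊆ ↑H ∧ I.F ⊆ ↑H ∧ Disjoint I.T I.F

/-- A rule of a positive program obtained as a reduct; `hasU` records whether
the special atom `u` (undefined in every interpretation) occurs in its body. -/
structure PosRule (α : Type) where
  head : α
  bodyPos : Finset α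
  hasU : Prop

/-- The reduct `P/I`: delete every rule whose negative body meets `I.T`,
delete each `not b` with `b ∈ I.F`, and replace the remaining negative
literals by the special atom `u`. -/
def reduct (P : NLP α) (I : Interp α) : Set (PosRule α) :=
  { q | ∃ r ∈ P, (∀ b ∈ r.bodyNeg, b ∉ I.T) ∧
        q.head = r.head ∧ q.bodyPos = r.bodyPos ∧
        (q.hasU ↔ ∃ b ∈ r.bodyNeg, b ∉ I.F) }

/-- The `Ψ` operator of a positive program `Q` relative to the Herbrand base
`H`; the special atom `u` is neither true nor false in any interpretation. -/
def PsiOp (H : Finset α) (Q : Set (PosRule α)) (J : Interp α) : Interp α where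
  T := { c | c ∈ H ∧ ∃ q ∈ Q, q.head = c ∧ ¬ q.hasU ∧ ∀ a ∈ q.bodyPos, a ∈ J.T }
  F := { c | c ∈ H ∧ ∀ q ∈ Q, q.head = c → ∃ a ∈ q.bodyPos, a ∈ J.F }

/-- Iteration of `Ψ` starting from `⟨∅, H⟩`. -/
def PsiIter (H : Finset α) (Q : Set (PosRule α)) : ℕ → Interp α
  | 0 => ⟨∅, ↑H⟩
  | n + 1 => PsiOp H Q (PsiIter H Q n)

/-- `Ω_P(I)`: the least three-valued model of the reduct `P/I`,
obtained as the `ω`-iteration of `Ψ`. -/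
def OmegaOp (H : Finset α) (P : NLP α) (I : Interp α) : Interp α where
  T := ⋃ n, (PsiIter H (reduct P I) n).T
  F := ⋂ n, (PsiIter H (reduct P I) n).F

/-- `I` is a partial stable model of `P` (over Herbrand base `H`). -/
def IsPSModel (H : Finset α) (P : NLP α) (I : Interp α) : Prop :=
  IsInterp H I ∧ OmegaOp H P I = I

/-- Well-founded model: a partial stable model with `⊆`-minimal true part. -/
def IsWFModel (H : Finset α) (P : NLP α) (I : Interp α) : Prop :=
  IsPSModel H P I ∧ ∀ J, IsPSModel H P J → ¬ J.T ⊂ I.T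

/-- Regular model: a partial stable model with `⊆`-maximal true part. -/
def IsRegularModel (H : Finset α) (P : NLP α) (I : Interp α) : Prop :=
  IsPSModel H P I ∧ ∀ J, IsPSModel H P J → ¬ I.T ⊂ J.T

/-- Stable model: a partial stable model with `T ∪ F = H`. -/
def IsStableModel (H : Finset α) (P : NLP α) (I : Interp α) : Prop :=
  IsPSModel H P I ∧ I.T ∪ I.F = ↑H

/-- L-stable model: a partial stable model with `⊆`-maximal `T ∪ F`. -/
def IsLStableModel (H : Finset α) (P : NLP α) (I : Interp α) : Prop :=
  IsPSModel H P I ∧ ∀ J, IsPSModel H P J → ¬ (I.T ∪ I.F) ⊂ (J.T ∪ J.F)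

/-- `IsStatement P c V R`: there is a statement of `P` with conclusion `c`,
vulnerabilities `V` and rules `R`.  A statement is built from a rule
`r = c ← a₁,…,a_m, not b₁,…,not b_n ∈ P` together with statements `sᵢ` for the
positive body atoms `aᵢ` (with `r` not among their rules); its vulnerabilities
are `Vul(s₁) ∪ … ∪ Vul(s_m) ∪ {b₁,…,b_n}` and its rules are
`Rules(s₁) ∪ … ∪ Rules(s_m) ∪ {r}`. -/
inductive IsStatement (P : NLP α) : α → Finset α → Finset (Rule α) → Prop where
  | mk (r : Rule α) (hr : r ∈ P) (v : α → Finset α) (ρ : α → Finset (Rule α))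
      (hsub : ∀ a ∈ r.bodyPos, IsStatement P a (v a) (ρ a))
      (hnr : ∀ a ∈ r.bodyPos, r ∉ ρ a) :
      IsStatement P r.head (r.bodyPos.biUnion v ∪ r.bodyNeg)
        (insert r (r.bodyPos.biUnion ρ))

/-- `c` is an argument of `P`: it is the conclusion of some statement. -/
def IsArg (P : NLP α) (c : α) : Prop := ∃ V R, IsStatement P c V R

open Classical in
/-- The set `A_P` of arguments of `P`. -/
noncomputable def argsOf (P : NLP α) : Finset α := (HB P).filter (IsArg P)

/-- `B` meets every vulnerability set of `a` in `P`. -/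
def HitsVul (P : NLP α) (B : Finset α) (a : α) : Prop :=
  ∀ V R, IsStatement P a V R → ∃ b ∈ B, b ∈ V

/-- A SETAF: a finite set of arguments and an attack relation between
finite sets of arguments and arguments. -/
structure SETAF (α : Type) where
  args : Finset α
  att : Finset α → α → Prop

/-- Well-formedness of a SETAF: attackers are nonempty sets of arguments
attacking arguments, and attacking sets are `⊆`-minimal. -/
def SETAF.Wf (S : SETAF α) : Prop :=
  (∀ B a, S.att B a → B.Nonempty ∧ B ⊆ S.args ∧ a ∈ S.args) ∧
  (∀ B a, S.att B a → ∀ B', B' ⊂ B → ¬ S.att B' a)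

/-- The SETAF `𝔄_P` associated with an NLP `P`: its arguments are the
conclusions of the statements of `P`, and `B` attacks `a` iff `B` is a
`⊆`-minimal set of arguments meeting every vulnerability set of `a`. -/
noncomputable def setafOf (P : NLP α) : SETAF α where
  args := argsOf P
  att := fun B a =>
    B ⊆ argsOf P ∧ a ∈ argsOf P ∧ HitsVul P B a ∧ ∀ B', B' ⊂ B → ¬ HitsVul P B' a

/-- Labels for arguments. -/
inductive Lab : Type
  | inn | out | und
deriving DecidableEq

/-- `in(L)`. -/
def labIn (S : SETAF α) (L : α → Lab) : Set α := { a | a ∈ S.args ∧ L a = Lab.inn }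

/-- `out(L)`. -/
def labOut (S : SETAF α) (L : α → Lab) : Set α := { a | a ∈ S.args ∧ L a = Lab.out }

/-- `undec(L)`. -/
def labUnd (S : SETAF α) (L : α → Lab) : Set α := { a | a ∈ S.args ∧ L a = Lab.und }

/-- Admissible labelling. -/
def AdmissibleLab (S : SETAF α) (L : α → Lab) : Prop :=
  ∀ a ∈ S.args,
    (L a = Lab.inn → ∀ B, S.att B a → ∃ b ∈ B, L b = Lab.out) ∧
    (L a = Lab.out → ∃ B, S.att B a ∧ ∀ b ∈ B, L b = Lab.inn)

/-- Complete labelling. -/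
def CompleteLab (S : SETAF α) (L : α → Lab) : Prop :=
  AdmissibleLab S L ∧
  ∀ a ∈ S.args, L a = Lab.und →
    (∃ B, S.att B a ∧ ∀ b ∈ B, L b ≠ Lab.out) ∧
    (∀ B, S.att B a → ∃ b ∈ B, L b ≠ Lab.inn)

/-- Grounded labelling: complete with `⊆`-minimal `in(L)`. -/
def GroundedLab (S : SETAF α) (L : α → Lab) : Prop :=
  CompleteLab S L ∧ ∀ L', CompleteLab S L' → ¬ labIn S L' ⊂ labIn S L

/-- Preferred labelling: complete with `⊆`-maximal `in(L)`. -/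
def PreferredLab (S : SETAF α) (L : α → Lab) : Prop :=
  CompleteLab S L ∧ ∀ L', CompleteLab S L' → ¬ labIn S L ⊂ labIn S L'

/-- Stable labelling: complete with `undec(L) = ∅`. -/
def StableLab (S : SETAF α) (L : α → Lab) : Prop :=
  CompleteLab S L ∧ labUnd S L = ∅

/-- Semi-stable labelling: complete with `⊆`-minimal `undec(L)`. -/
def SemiStableLab (S : SETAF α) (L : α → Lab) : Prop :=
  CompleteLab S L ∧ ∀ L', CompleteLab S L' → ¬ labUnd S L' ⊂ labUnd S L

/-- `L2I_P`: the interpretation associated with a labelling of `𝔄_P`. -/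
def L2I (P : NLP α) (L : α → Lab) : Interp α where
  T := { c | c ∈ HB P ∧ c ∈ argsOf P ∧ L c = Lab.inn }
  F := { c | c ∈ HB P ∧ (c ∉ argsOf P ∨ (c ∈ argsOf P ∧ L c = Lab.out)) }

open Classical in
/-- `I2L`: the labelling associated with an interpretation (meaningful on
the arguments). -/
noncomputable def I2L (I : Interp α) : α → Lab := fun c =>
  if c ∈ I.T then Lab.inn else if c ∈ I.F then Lab.out else Lab.und

/-- `L2I_𝔄`: the interpretation `⟨in(L), out(L)⟩` associated with a labelling
of a SETAF `𝔄`. -/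
def L2Iset (S : SETAF α) (L : α → Lab) : Interp α := ⟨labIn S L, labOut S L⟩

/-- `V` meets every attacker of `a` in `S`. -/
def HitsAtt (S : SETAF α) (a : α) (V : Finset α) : Prop :=
  ∀ B, S.att B a → ∃ b ∈ B, b ∈ V

/-- `V ∈ V_a`: a `⊆`-minimal set of arguments meeting every attacker of `a`. -/
def MemVa (S : SETAF α) (a : α) (V : Finset α) : Prop :=
  V ⊆ S.args ∧ HitsAtt S a V ∧ ∀ V', V' ⊂ V → ¬ HitsAtt S a V'

open Classical in
/-- The NLP `P_𝔄` associated with a SETAF `𝔄`: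
`{ a ← not b₁,…,not b_n | a ∈ A, {b₁,…,b_n} ∈ V_a }`. -/
noncomputable def nlpOf (S : SETAF α) : NLP α :=
  ((S.args ×ˢ S.args.powerset).filter (fun p => MemVa S p.1 p.2)).image
    (fun p => { head := p.1, bodyPos := ∅, bodyNeg := p.2 })

/-- Redundancy-Free Atomic Logic Program: every rule is atomic (no positive
body), every atom is a head, and no rule's negative body strictly contains
that of another rule with the same head. -/
def IsRFALP (P : NLP α) : Prop :=
  (∀ r ∈ P, r.bodyPos = ∅) ∧
  HB P = P.image Rule.head ∧
  ∀ r ∈ P, ∀ r' ∈ P, r'.head = r.head → ¬ r'.bodyNeg ⊂ r.bodyNeg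

/-- Unfolding: replace a rule `c ← a, a₁,…,a_m, not b₁,…,not b_n` by all rules
obtained by resolving `a` against the rules of the program with head `a`. -/
def StepU (P₁ P₂ : NLP α) : Prop :=
  ∃ r ∈ P₁, ∃ a ∈ r.bodyPos,
    P₂ = P₁.erase r ∪
      (P₁.filter (fun r' => r'.head = a)).image
        (fun r' => { head := r.head,
                     bodyPos := r'.bodyPos ∪ r.bodyPos.erase a,
                     bodyNeg := r'.bodyNeg ∪ r.bodyNeg })

/-- Elimination of tautologies: delete a rule whose head occurs in its
positive body. -/
def StepT (P₁ P₂ : NLP α) : Prop :=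
  ∃ r ∈ P₁, r.head ∈ r.bodyPos ∧ P₂ = P₁.erase r

/-- Positive reduction: delete a literal `not b` from the body of a rule,
where `b` is not the head of any rule of the program. -/
def StepP (P₁ P₂ : NLP α) : Prop :=
  ∃ r ∈ P₁, ∃ b ∈ r.bodyNeg, (∀ r' ∈ P₁, r'.head ≠ b) ∧
    P₂ = insert { head := r.head, bodyPos := r.bodyPos,
                  bodyNeg := r.bodyNeg.erase b } (P₁.erase r)

/-- Elimination of non-minimal rules: delete a rule subsumed by a distinct
rule with the same head and smaller bodies. -/
def StepM (P₁ P₂ : NLP α) : Prop :=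
  ∃ r ∈ P₁, ∃ r' ∈ P₁, r ≠ r' ∧ r'.head = r.head ∧
    r'.bodyPos ⊆ r.bodyPos ∧ r'.bodyNeg ⊆ r.bodyNeg ∧ P₂ = P₁.erase r

/-- `↦_UTPM`: the union of the four transformations. -/
def StepUTPM (P₁ P₂ : NLP α) : Prop :=
  StepU P₁ P₂ ∨ StepT P₁ P₂ ∨ StepP P₁ P₂ ∨ StepM P₁ P₂

/-- `P` is irreducible w.r.t. `↦_UTPM`: there is no `P' ≠ P` with
`P ↦_UTPM P'`. -/
def UTPMIrreducible (P : NLP α) : Prop :=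
  ¬ ∃ P', StepUTPM P P' ∧ P' ≠ P

set_option linter.unusedSectionVars false
/-! ### Auxiliary development: derivation trees -/

/-- Derivation trees: a rule together with a list of child subtrees. -/
inductive DT (α : Type) : Type where
  | node : Rule α → List (DT α) → DT α

/-- Root rule of a tree. -/
def DT.root : DT α → Rule α
  | .node r _ => r

/-- Conclusion of a tree. -/
def DT.conc : DT α → α
  | .node r _ => r.head

@[simp] lemma DT.conc_node (r : Rule α) (ts : List (DT α)) :
    DT.conc (.node r ts) = r.head := rfl

lemma DT.conc_eq_root_head (t : DT α) : DT.conc t = (DT.root t).head := by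
  cases t; rfl

/-- `b` occurs as (negative-body) vulnerability somewhere in the tree. -/
inductive VulMem : DT α → α → Prop where
  | here (r : Rule α) (ts : List (DT α)) (b : α) :
      b ∈ r.bodyNeg → VulMem (.node r ts) b
  | there (r : Rule α) (ts : List (DT α)) (t : DT α) (b : α) :
      t ∈ ts → VulMem t b → VulMem (.node r ts) b

/-- `r'` occurs as a rule somewhere in the tree. -/
inductive RuleMem : DT α → Rule α → Prop where
  | here (r : Rule α) (ts : List (DT α)) : RuleMem (.node r ts) r
  | there (r : Rule α) (ts : List (DT α)) (t : DT α) (r' : Rule α) :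
      t ∈ ts → RuleMem t r' → RuleMem (.node r ts) r'

/-- Well-formed derivation trees over a program `P`. -/
inductive WfT (P : NLP α) : DT α → Prop where
  | node (r : Rule α) (ts : List (DT α)) :
      r ∈ P → (∀ t ∈ ts, WfT P t) →
      (∀ a ∈ r.bodyPos, ∃ t ∈ ts, DT.conc t = a) → WfT P (.node r ts)

lemma sizeOf_lt_node {t : DT α} {ts : List (DT α)} (h : t ∈ ts) (r : Rule α) :
    sizeOf t < sizeOf (DT.node r ts) := by
  have h1 := List.sizeOf_lt_of_mem h
  have h2 : sizeOf (DT.node r ts) = 1 + sizeOf r + sizeOf ts := by simp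
  omega

/-- Build a tree from a rule and trees for its positive body atoms. -/
lemma buildDT {P : NLP α} {r : Rule α} (hr : r ∈ P) (W : α → Prop)
    (hch : ∀ a ∈ r.bodyPos, ∃ t, WfT P t ∧ DT.conc t = a ∧ ∀ b, VulMem t b → W b) :
    ∃ t, WfT P t ∧ DT.conc t = r.head ∧ ∀ b, VulMem t b → b ∈ r.bodyNeg ∨ W b := by
  classical
  choose g hg1 hg2 hg3 using hch
  refine ⟨.node r (r.bodyPos.toList.attach.map fun a =>
      g a.1 (Finset.mem_toList.mp a.2)), ?_, rfl, ?_⟩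
  · refine WfT.node r _ hr ?_ ?_
    · intro t ht
      rw [List.mem_map] at ht
      obtain ⟨a, -, rfl⟩ := ht
      exact hg1 _ _
    · intro a ha
      exact ⟨_,
        List.mem_map.mpr ⟨⟨a, Finset.mem_toList.mpr ha⟩, List.mem_attach _ _, rfl⟩,
        hg2 _ _⟩
  · intro b hb
    cases hb with
    | here _ _ _ h => exact Or.inl h
    | there _ _ t _ ht hv =>
      rw [List.mem_map] at ht
      obtain ⟨a, -, rfl⟩ := ht
      exact Or.inr (hg3 _ _ b hv)

/-- From a statement to a derivation tree. -/
lemma toTree {P : NLP α} {c : α} {V : Finset α} {R : Finset (Rule α)}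
    (h : IsStatement P c V R) :
    ∃ t, WfT P t ∧ DT.conc t = c ∧ ∀ b, VulMem t b → b ∈ V := by
  induction h with
  | mk r hr v ρ hsub hnr ih =>
    have hch : ∀ a ∈ r.bodyPos, ∃ t, WfT P t ∧ DT.conc t = a ∧
        ∀ b, VulMem t b → b ∈ r.bodyPos.biUnion v := by
      intro a ha
      obtain ⟨t, w, hc, hs⟩ := ih a ha
      exact ⟨t, w, hc, fun b hb => Finset.mem_biUnion.mpr ⟨a, ha, hs b hb⟩⟩
    obtain ⟨t, h1, h2, h3⟩ := buildDT hr (fun b => b ∈ r.bodyPos.biUnion v) hch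
    refine ⟨t, h1, h2, fun b hb => ?_⟩
    rcases h3 b hb with h | h
    · exact Finset.mem_union_right _ h
    · exact Finset.mem_union_left _ h

/-- Extract a subtree whose root rule is `r`. -/
lemma extractDT {P : NLP α} {r : Rule α} :
    ∀ n t, sizeOf t < n → WfT P t → RuleMem t r →
    ∃ t', WfT P t' ∧ DT.root t' = r ∧ sizeOf t' ≤ sizeOf t ∧
      (∀ b, VulMem t' b → VulMem t b) ∧ (∀ x, RuleMem t' x → RuleMem t x) := by
  intro n
  induction n using Nat.strong_induction_on with
  | _ n ih =>
  intro t hsz hwf hrm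
  cases hwf with
  | node r'' ts hr'' hall hwit =>
    cases hrm with
    | here => exact ⟨_, WfT.node _ _ hr'' hall hwit, rfl, le_refl _,
        fun _ h => h, fun _ h => h⟩
    | there _ _ t₀ _ ht₀ hrm₀ =>
      obtain ⟨t', h1, h2, h3, h4, h5⟩ :=
        ih (sizeOf (DT.node r'' ts)) hsz t₀ (sizeOf_lt_node ht₀ _) (hall t₀ ht₀) hrm₀
      exact ⟨t', h1, h2, le_trans h3 (le_of_lt (sizeOf_lt_node ht₀ _)),
        fun b hb => .there _ _ _ _ ht₀ (h4 b hb),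
        fun x hx => .there _ _ _ _ ht₀ (h5 x hx)⟩

/-- From a derivation tree to a statement (with smaller vulnerabilities). -/
lemma toStmtAux {P : NLP α} :
    ∀ n, ∀ t : DT α, sizeOf t < n → WfT P t →
    ∃ V R, IsStatement P (DT.conc t) V R ∧ (∀ b ∈ V, VulMem t b) ∧
      (∀ x ∈ R, RuleMem t x) := by
  classical
  intro n
  induction n using Nat.strong_induction_on with
  | _ n ih =>
  intro t hsz hwf
  cases hwf with
  | node r ts hr hall hwit =>
    by_cases hcase : ∃ t₀ ∈ ts, RuleMem t₀ r
    · obtain ⟨t₀, ht₀, hrm⟩ := hcase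
      obtain ⟨t', h1, h2, h3, h4, h5⟩ :=
        extractDT (sizeOf t₀ + 1) t₀ (by omega) (hall t₀ ht₀) hrm
      obtain ⟨V, R, hs, hv, hrl⟩ := ih (sizeOf (DT.node r ts)) hsz t'
        (lt_of_le_of_lt h3 (sizeOf_lt_node ht₀ _)) h1
      rw [DT.conc_eq_root_head, h2] at hs
      exact ⟨V, R, hs, fun b hb => .there _ _ _ _ ht₀ (h4 b (hv b hb)),
        fun x hx => .there _ _ _ _ ht₀ (h5 x (hrl x hx))⟩
    · push_neg at hcase
      have hsubs : ∀ a ∈ r.bodyPos, ∃ (V : Finset α) (R : Finset (Rule α)),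
          IsStatement P a V R ∧ (∀ b ∈ V, VulMem (DT.node r ts) b) ∧
          (∀ x ∈ R, RuleMem (DT.node r ts) x) ∧ r ∉ R := by
        intro a ha
        obtain ⟨t₀, ht₀, hc₀⟩ := hwit a ha
        obtain ⟨V, R, hs, hv, hrl⟩ := ih (sizeOf (DT.node r ts)) hsz t₀
          (sizeOf_lt_node ht₀ _) (hall t₀ ht₀)
        rw [hc₀] at hs
        exact ⟨V, R, hs, fun b hb => .there _ _ _ _ ht₀ (hv b hb),
          fun x hx => .there _ _ _ _ ht₀ (hrl x hx),
          fun hrR => hcase t₀ ht₀ (hrl r hrR)⟩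
      choose v' ρ' h1 h2 h3 h4 using hsubs
      set v : α → Finset α := fun a => if h : a ∈ r.bodyPos then v' a h else ∅ with hv
      set ρ : α → Finset (Rule α) := fun a => if h : a ∈ r.bodyPos then ρ' a h else ∅ with hρ
      have hst : IsStatement P r.head (r.bodyPos.biUnion v ∪ r.bodyNeg)
          (insert r (r.bodyPos.biUnion ρ)) := by
        refine IsStatement.mk r hr v ρ ?_ ?_
        · intro a ha
          simp only [hv, hρ, dif_pos ha]
          exact h1 a ha
        · intro a ha
          simp only [hρ, dif_pos ha]
          exact h4 a ha
      refine ⟨_, _, hst, ?_, ?_⟩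
      · intro b hb
        rcases Finset.mem_union.mp hb with hb | hb
        · obtain ⟨a, ha, hba⟩ := Finset.mem_biUnion.mp hb
          rw [hv] at hba
          simp only [dif_pos ha] at hba
          exact h2 a ha b hba
        · exact .here _ _ _ hb
      · intro x hx
        rcases Finset.mem_insert.mp hx with rfl | hx
        · exact .here _ _
        · obtain ⟨a, ha, hxa⟩ := Finset.mem_biUnion.mp hx
          rw [hρ] at hxa
          simp only [dif_pos ha] at hxa
          exact h3 a ha x hxa

lemma toStmt {P : NLP α} {t : DT α} (h : WfT P t) :
    ∃ V R, IsStatement P (DT.conc t) V R ∧ ∀ b ∈ V, VulMem t b := by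
  obtain ⟨V, R, h1, h2, -⟩ := toStmtAux (sizeOf t + 1) t (by omega) h
  exact ⟨V, R, h1, h2⟩

/-- Well-formedness is monotone in the program. -/
lemma WfT.mono {P Q : NLP α} (hPQ : P ⊆ Q) :
    ∀ t : DT α, WfT P t → WfT Q t := by
  have key : ∀ n, ∀ t : DT α, sizeOf t < n → WfT P t → WfT Q t := by
    intro n
    induction n using Nat.strong_induction_on with
    | _ n ih =>
    intro t hsz hwf
    cases hwf with
    | node r ts hr hall hwit =>
      exact WfT.node r ts (hPQ hr)
        (fun t₀ ht₀ => ih (sizeOf (DT.node r ts)) hsz t₀ (sizeOf_lt_node ht₀ _)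
          (hall t₀ ht₀)) hwit
  exact fun t => key (sizeOf t + 1) t (by omega)

/-- Tree-level simulation of one program by another, up to exceptional atoms `E`. -/
def TransDT (P₁ P₂ : NLP α) (E : α → Prop) : Prop :=
  ∀ t, WfT P₁ t → ∃ t', WfT P₂ t' ∧ DT.conc t' = DT.conc t ∧
    ∀ b, VulMem t' b → VulMem t b ∨ E b

lemma stmt_head {P : NLP α} {c : α} {V : Finset α} {R : Finset (Rule α)}
    (h : IsStatement P c V R) : ∃ r ∈ P, r.head = c := by
  cases h with
  | mk r hr v ρ hsub hnr => exact ⟨r, hr, rfl⟩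

lemma head_mem_HB {P : NLP α} {r : Rule α} (h : r ∈ P) : r.head ∈ HB P :=
  Finset.mem_sup.mpr ⟨r, h, Finset.mem_insert_self _ _⟩

lemma isArg_mem_HB {P : NLP α} {c : α} (h : IsArg P c) : c ∈ HB P := by
  obtain ⟨V, R, hs⟩ := h
  obtain ⟨r, hr, rfl⟩ := stmt_head hs
  exact head_mem_HB hr

lemma mem_argsOf {P : NLP α} {c : α} : c ∈ argsOf P ↔ IsArg P c := by
  classical
  constructor
  · intro h
    exact (Finset.mem_filter.mp h).2
  · intro h
    exact Finset.mem_filter.mpr ⟨isArg_mem_HB h, h⟩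

/-- Statement-level simulation derived from tree-level simulation. -/
lemma transStmt {P₁ P₂ : NLP α} {E : α → Prop} (h : TransDT P₁ P₂ E)
    {c : α} {V : Finset α} {R : Finset (Rule α)} (hs : IsStatement P₁ c V R) :
    ∃ V' R', IsStatement P₂ c V' R' ∧ ∀ x ∈ V', x ∈ V ∨ E x := by
  obtain ⟨t, hw, hc, hv⟩ := toTree hs
  obtain ⟨t', hw', hc', hv'⟩ := h t hw
  obtain ⟨V', R', hs', hv''⟩ := toStmt hw'
  rw [hc', hc] at hs'
  refine ⟨V', R', hs', fun x hx => ?_⟩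
  rcases hv' x (hv'' x hx) with h' | h'
  · exact Or.inl (hv x h')
  · exact Or.inr h'

lemma master {P₁ P₂ : NLP α} {E : α → Prop}
    (hE₁ : ∀ r ∈ P₁, ¬ E r.head) (hE₂ : ∀ r ∈ P₂, ¬ E r.head)
    (h₁₂ : TransDT P₁ P₂ E) (h₂₁ : TransDT P₂ P₁ E) :
    setafOf P₁ = setafOf P₂ := by
  classical
  -- arguments coincide
  have hargIff : ∀ c, IsArg P₁ c ↔ IsArg P₂ c := by
    intro c
    constructor
    · rintro ⟨V, R, hs⟩
      obtain ⟨V', R', hs', -⟩ := transStmt h₁₂ hs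
      exact ⟨V', R', hs'⟩
    · rintro ⟨V, R, hs⟩
      obtain ⟨V', R', hs', -⟩ := transStmt h₂₁ hs
      exact ⟨V', R', hs'⟩
  have hargs : argsOf P₁ = argsOf P₂ := by
    ext c
    rw [mem_argsOf, mem_argsOf, hargIff]
  have hnotE : ∀ x, IsArg P₁ x → ¬ E x := by
    rintro x ⟨V, R, hs⟩ hEx
    obtain ⟨r, hr, rfl⟩ := stmt_head hs
    exact hE₁ r hr hEx
  -- HitsVul coincides on E-free sets
  have hhits : ∀ (B : Finset α) a, (∀ x ∈ B, ¬ E x) →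
      (HitsVul P₁ B a ↔ HitsVul P₂ B a) := by
    intro B a hB
    constructor
    · intro h V R hs
      obtain ⟨V', R', hs', hsub⟩ := transStmt h₂₁ hs
      obtain ⟨b, hbB, hbV⟩ := h V' R' hs'
      rcases hsub b hbV with h' | h'
      · exact ⟨b, hbB, h'⟩
      · exact absurd h' (hB b hbB)
    · intro h V R hs
      obtain ⟨V', R', hs', hsub⟩ := transStmt h₁₂ hs
      obtain ⟨b, hbB, hbV⟩ := h V' R' hs'
      rcases hsub b hbV with h' | h'
      · exact ⟨b, hbB, h'⟩
      · exact absurd h' (hB b hbB)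
  have hBfree : ∀ (B : Finset α), B ⊆ argsOf P₁ → ∀ x ∈ B, ¬ E x := by
    intro B hB x hx
    exact hnotE x (mem_argsOf.mp (hB hx))
  have hatt : ∀ (B : Finset α) a,
      (B ⊆ argsOf P₁ ∧ a ∈ argsOf P₁ ∧ HitsVul P₁ B a ∧
        ∀ B', B' ⊂ B → ¬ HitsVul P₁ B' a) ↔
      (B ⊆ argsOf P₂ ∧ a ∈ argsOf P₂ ∧ HitsVul P₂ B a ∧
        ∀ B', B' ⊂ B → ¬ HitsVul P₂ B' a) := by
    intro B a
    constructor
    · rintro ⟨hB, ha, hh, hmin⟩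
      refine ⟨hargs ▸ hB, hargs ▸ ha, (hhits B a (hBfree B hB)).mp hh, ?_⟩
      intro B' hB' hh'
      exact hmin B' hB'
        ((hhits B' a (hBfree B' (subset_trans (subset_of_ssubset hB') hB))).mpr hh')
    · rintro ⟨hB, ha, hh, hmin⟩
      have hB₁ : B ⊆ argsOf P₁ := hargs ▸ hB
      refine ⟨hB₁, hargs ▸ ha, (hhits B a (hBfree B hB₁)).mpr hh, ?_⟩
      intro B' hB' hh'
      exact hmin B' hB'
        ((hhits B' a (hBfree B' (subset_trans (subset_of_ssubset hB') hB₁))).mp hh')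
  show SETAF.mk (argsOf P₁) _ = SETAF.mk (argsOf P₂) _
  rw [SETAF.mk.injEq]
  refine ⟨hargs, ?_⟩
  funext B a
  exact propext (hatt B a)

/-- Tautology elimination, forward direction. -/
lemma transT {P : NLP α} {r : Rule α} (ht : r.head ∈ r.bodyPos) :
    TransDT P (P.erase r) (fun _ => False) := by
  have key : ∀ n, ∀ t : DT α, sizeOf t < n → WfT P t →
      ∃ t', WfT (P.erase r) t' ∧ DT.conc t' = DT.conc t ∧
        ∀ b, VulMem t' b → VulMem t b := by
    intro n
    induction n using Nat.strong_induction_on with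
    | _ n ih =>
    intro t hsz hwf
    cases hwf with
    | node r'' ts hr'' hall hwit =>
      by_cases hrr : r'' = r
      · subst hrr
        obtain ⟨t₀, ht₀, hc₀⟩ := hwit r''.head ht
        obtain ⟨t', h1, h2, h3⟩ := ih (sizeOf (DT.node r'' ts)) hsz t₀
          (sizeOf_lt_node ht₀ _) (hall t₀ ht₀)
        exact ⟨t', h1, by rw [h2, hc₀, DT.conc_node],
          fun b hb => .there _ _ _ _ ht₀ (h3 b hb)⟩
      · have hch : ∀ a ∈ r''.bodyPos, ∃ t', WfT (P.erase r) t' ∧ DT.conc t' = a ∧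
            ∀ b, VulMem t' b → VulMem (DT.node r'' ts) b := by
          intro a ha
          obtain ⟨t₀, ht₀, hc₀⟩ := hwit a ha
          obtain ⟨t', h1, h2, h3⟩ := ih (sizeOf (DT.node r'' ts)) hsz t₀
            (sizeOf_lt_node ht₀ _) (hall t₀ ht₀)
          exact ⟨t', h1, h2.trans hc₀, fun b hb => .there _ _ _ _ ht₀ (h3 b hb)⟩
        obtain ⟨t', h1, h2, h3⟩ :=
          buildDT (Finset.mem_erase.mpr ⟨hrr, hr''⟩) _ hch
        exact ⟨t', h1, h2, fun b hb => (h3 b hb).elim (fun h => .here _ _ _ h) id⟩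
  intro t hwf
  obtain ⟨t', a, b, c⟩ := key (sizeOf t + 1) t (by omega) hwf
  exact ⟨t', a, b, fun x hx => Or.inl (c x hx)⟩

/-- Non-minimal rule elimination, forward direction. -/
lemma transM {P : NLP α} {r r' : Rule α} (hr' : r' ∈ P) (hne : r ≠ r')
    (hh : r'.head = r.head) (hp : r'.bodyPos ⊆ r.bodyPos)
    (hn : r'.bodyNeg ⊆ r.bodyNeg) :
    TransDT P (P.erase r) (fun _ => False) := by
  have key : ∀ n, ∀ t : DT α, sizeOf t < n → WfT P t →
      ∃ t', WfT (P.erase r) t' ∧ DT.conc t' = DT.conc t ∧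
        ∀ b, VulMem t' b → VulMem t b := by
    intro n
    induction n using Nat.strong_induction_on with
    | _ n ih =>
    intro t hsz hwf
    cases hwf with
    | node r'' ts hr'' hall hwit =>
      have hch : ∀ a ∈ r''.bodyPos, ∃ t', WfT (P.erase r) t' ∧ DT.conc t' = a ∧
          ∀ b, VulMem t' b → VulMem (DT.node r'' ts) b := by
        intro a ha
        obtain ⟨t₀, ht₀, hc₀⟩ := hwit a ha
        obtain ⟨t', h1, h2, h3⟩ := ih (sizeOf (DT.node r'' ts)) hsz t₀
          (sizeOf_lt_node ht₀ _) (hall t₀ ht₀)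
        exact ⟨t', h1, h2.trans hc₀, fun b hb => .there _ _ _ _ ht₀ (h3 b hb)⟩
      by_cases hrr : r'' = r
      · subst hrr
        have hr'e : r' ∈ P.erase r'' := Finset.mem_erase.mpr ⟨fun h => hne h.symm, hr'⟩
        obtain ⟨t', h1, h2, h3⟩ := buildDT hr'e _
          (fun a ha => hch a (hp ha))
        refine ⟨t', h1, by rw [h2, hh, DT.conc_node], fun b hb => ?_⟩
        exact (h3 b hb).elim (fun h => .here _ _ _ (hn h)) id
      · obtain ⟨t', h1, h2, h3⟩ :=
          buildDT (Finset.mem_erase.mpr ⟨hrr, hr''⟩) _ hch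
        exact ⟨t', h1, h2, fun b hb => (h3 b hb).elim (fun h => .here _ _ _ h) id⟩
  intro t hwf
  obtain ⟨t', a, b, c⟩ := key (sizeOf t + 1) t (by omega) hwf
  exact ⟨t', a, b, fun x hx => Or.inl (c x hx)⟩

/-- `TransDT` from subset (used for backward directions of T and M). -/
lemma transSubset {P Q : NLP α} (h : P ⊆ Q) : TransDT P Q (fun _ => False) :=
  fun t hwf => ⟨t, WfT.mono h t hwf, rfl, fun _ hb => Or.inl hb⟩

/-- Positive reduction, forward direction. -/
lemma transPfwd {P : NLP α} {r : Rule α} {b : α} (hr : r ∈ P) :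
    TransDT P (insert { head := r.head, bodyPos := r.bodyPos, bodyNeg := r.bodyNeg.erase b } (P.erase r)) (fun x => x = b) := by
  set r' : Rule α := { head := r.head, bodyPos := r.bodyPos, bodyNeg := r.bodyNeg.erase b } with hr'def
  set Q : NLP α := insert r' (P.erase r) with hQdef
  have key : ∀ n, ∀ t : DT α, sizeOf t < n → WfT P t →
      ∃ t', WfT Q t' ∧ DT.conc t' = DT.conc t ∧
        ∀ x, VulMem t' x → VulMem t x := by
    intro n
    induction n using Nat.strong_induction_on with
    | _ n ih =>
    intro t hsz hwf
    cases hwf with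
    | node r'' ts hr'' hall hwit =>
      have hch : ∀ a ∈ r''.bodyPos, ∃ t', WfT Q t' ∧ DT.conc t' = a ∧
          ∀ x, VulMem t' x → VulMem (DT.node r'' ts) x := by
        intro a ha
        obtain ⟨t₀, ht₀, hc₀⟩ := hwit a ha
        obtain ⟨t', h1, h2, h3⟩ := ih (sizeOf (DT.node r'' ts)) hsz t₀
          (sizeOf_lt_node ht₀ _) (hall t₀ ht₀)
        exact ⟨t', h1, h2.trans hc₀, fun x hx => .there _ _ _ _ ht₀ (h3 x hx)⟩
      by_cases hrr : r'' = r
      · subst hrr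
        obtain ⟨t', h1, h2, h3⟩ := buildDT (Finset.mem_insert_self r' _) _
          (fun a (ha : a ∈ r'.bodyPos) => hch a ha)
        refine ⟨t', h1, by rw [h2]; rfl, fun x hx => ?_⟩
        rcases h3 x hx with h | h
        · exact .here _ _ _ (Finset.mem_of_mem_erase h)
        · exact h
      · obtain ⟨t', h1, h2, h3⟩ := buildDT
          (Finset.mem_insert_of_mem (Finset.mem_erase.mpr ⟨hrr, hr''⟩)) _ hch
        exact ⟨t', h1, h2, fun x hx => (h3 x hx).elim (fun h => .here _ _ _ h) id⟩
  intro t hwf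
  obtain ⟨t', a, c, d⟩ := key (sizeOf t + 1) t (by omega) hwf
  exact ⟨t', a, c, fun x hx => Or.inl (d x hx)⟩

/-- Positive reduction, backward direction. -/
lemma transPbwd {P : NLP α} {r : Rule α} {b : α} (hr : r ∈ P) :
    TransDT (insert { head := r.head, bodyPos := r.bodyPos, bodyNeg := r.bodyNeg.erase b } (P.erase r)) P (fun x => x = b) := by
  classical
  set r' : Rule α := { head := r.head, bodyPos := r.bodyPos, bodyNeg := r.bodyNeg.erase b } with hr'def
  set Q : NLP α := insert r' (P.erase r) with hQdef
  have key : ∀ n, ∀ t : DT α, sizeOf t < n → WfT Q t →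
      ∃ t', WfT P t' ∧ DT.conc t' = DT.conc t ∧
        ∀ x, VulMem t' x → VulMem t x ∨ x = b := by
    intro n
    induction n using Nat.strong_induction_on with
    | _ n ih =>
    intro t hsz hwf
    cases hwf with
    | node r'' ts hr'' hall hwit =>
      have hch : ∀ a ∈ r''.bodyPos, ∃ t', WfT P t' ∧ DT.conc t' = a ∧
          ∀ x, VulMem t' x → VulMem (DT.node r'' ts) x ∨ x = b := by
        intro a ha
        obtain ⟨t₀, ht₀, hc₀⟩ := hwit a ha
        obtain ⟨t', h1, h2, h3⟩ := ih (sizeOf (DT.node r'' ts)) hsz t₀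
          (sizeOf_lt_node ht₀ _) (hall t₀ ht₀)
        exact ⟨t', h1, h2.trans hc₀,
          fun x hx => (h3 x hx).imp_left (fun h => .there _ _ _ _ ht₀ h)⟩
      rcases Finset.mem_insert.mp hr'' with hrr | hrr
      · subst hrr
        obtain ⟨t', h1, h2, h3⟩ := buildDT hr _
          (fun a (ha : a ∈ r.bodyPos) => hch a ha)
        refine ⟨t', h1, by rw [h2]; rfl, fun x hx => ?_⟩
        rcases h3 x hx with h | h
        · by_cases hxb : x = b
          · exact Or.inr hxb
          · exact Or.inl (.here _ _ _ (Finset.mem_erase.mpr ⟨hxb, h⟩))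
        · exact h
      · obtain ⟨t', h1, h2, h3⟩ := buildDT (Finset.mem_of_mem_erase hrr) _ hch
        refine ⟨t', h1, h2, fun x hx => ?_⟩
        rcases h3 x hx with h | h
        · exact Or.inl (.here _ _ _ h)
        · exact h
  intro t hwf
  exact key (sizeOf t + 1) t (by omega) hwf

/-- Unfolding, forward direction. -/
lemma transUfwd {P : NLP α} {r : Rule α} {a : α} (hr : r ∈ P) (ha : a ∈ r.bodyPos) :
    TransDT P (P.erase r ∪ (P.filter (fun r' => r'.head = a)).image
      (fun r' => { head := r.head, bodyPos := r'.bodyPos ∪ r.bodyPos.erase a, bodyNeg := r'.bodyNeg ∪ r.bodyNeg })) (fun _ => False) := by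
  classical
  set Q : NLP α := P.erase r ∪ (P.filter (fun r' => r'.head = a)).image
      (fun r' => { head := r.head, bodyPos := r'.bodyPos ∪ r.bodyPos.erase a, bodyNeg := r'.bodyNeg ∪ r.bodyNeg }) with hQdef
  have key : ∀ n, ∀ t : DT α, sizeOf t < n → WfT P t →
      ∃ t', WfT Q t' ∧ DT.conc t' = DT.conc t ∧
        ∀ x, VulMem t' x → VulMem t x := by
    intro n
    induction n using Nat.strong_induction_on with
    | _ n ih =>
    intro t hsz hwf
    cases hwf with
    | node r'' ts hr'' hall hwit =>
      have hch : ∀ a' ∈ r''.bodyPos, ∃ t', WfT Q t' ∧ DT.conc t' = a' ∧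
          ∀ x, VulMem t' x → VulMem (DT.node r'' ts) x := by
        intro a' ha'
        obtain ⟨t₀, ht₀, hc₀⟩ := hwit a' ha'
        obtain ⟨t', h1, h2, h3⟩ := ih (sizeOf (DT.node r'' ts)) hsz t₀
          (sizeOf_lt_node ht₀ _) (hall t₀ ht₀)
        exact ⟨t', h1, h2.trans hc₀, fun x hx => .there _ _ _ _ ht₀ (h3 x hx)⟩
      by_cases hrr : r'' = r
      · subst hrr
        obtain ⟨t₀, ht₀, hc₀⟩ := hwit a ha
        have hwf₀ := hall t₀ ht₀
        cases t₀ with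
        | node r₀ ts₀ =>
        cases hwf₀ with
        | node _ _ hr₀ hall₀ hwit₀ =>
        have hc₀' : r₀.head = a := hc₀
        have hrQ : ({ head := r''.head, bodyPos := r₀.bodyPos ∪ r''.bodyPos.erase a, bodyNeg := r₀.bodyNeg ∪ r''.bodyNeg } : Rule α) ∈ Q := by
          rw [hQdef]
          exact Finset.mem_union_right _ (Finset.mem_image.mpr
            ⟨r₀, Finset.mem_filter.mpr ⟨hr₀, hc₀'⟩, rfl⟩)
        have hchU : ∀ a' ∈ r₀.bodyPos ∪ r''.bodyPos.erase a,
            ∃ t', WfT Q t' ∧ DT.conc t' = a' ∧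
              ∀ x, VulMem t' x → VulMem (DT.node r'' ts) x := by
          intro a' ha'
          rcases Finset.mem_union.mp ha' with h | h
          · obtain ⟨t₁, ht₁, hc₁⟩ := hwit₀ a' h
            obtain ⟨t', h1, h2, h3⟩ := ih (sizeOf (DT.node r'' ts)) hsz t₁
              (lt_trans (sizeOf_lt_node ht₁ r₀) (sizeOf_lt_node ht₀ _))
              (hall₀ t₁ ht₁)
            exact ⟨t', h1, h2.trans hc₁, fun x hx =>
              .there _ _ _ _ ht₀ (.there _ _ _ _ ht₁ (h3 x hx))⟩
          · exact hch a' (Finset.mem_of_mem_erase h)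
        obtain ⟨t', h1, h2, h3⟩ := buildDT hrQ _ hchU
        refine ⟨t', h1, h2, fun x hx => ?_⟩
        rcases h3 x hx with h | h
        · rcases Finset.mem_union.mp h with h | h
          · exact .there _ _ _ _ ht₀ (.here _ _ _ h)
          · exact .here _ _ _ h
        · exact h
      · have hrQ : r'' ∈ Q := by
          rw [hQdef]
          exact Finset.mem_union_left _ (Finset.mem_erase.mpr ⟨hrr, hr''⟩)
        obtain ⟨t', h1, h2, h3⟩ := buildDT hrQ _ hch
        exact ⟨t', h1, h2, fun x hx => (h3 x hx).elim (fun h => .here _ _ _ h) id⟩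
  intro t hwf
  obtain ⟨t', h1, h2, h3⟩ := key (sizeOf t + 1) t (by omega) hwf
  exact ⟨t', h1, h2, fun x hx => Or.inl (h3 x hx)⟩

/-- Unfolding, backward direction. -/
lemma transUbwd {P : NLP α} {r : Rule α} {a : α} (hr : r ∈ P) (ha : a ∈ r.bodyPos) :
    TransDT (P.erase r ∪ (P.filter (fun r' => r'.head = a)).image
      (fun r' => { head := r.head, bodyPos := r'.bodyPos ∪ r.bodyPos.erase a, bodyNeg := r'.bodyNeg ∪ r.bodyNeg })) P (fun _ => False) := by
  classical
  set Q : NLP α := P.erase r ∪ (P.filter (fun r' => r'.head = a)).image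
      (fun r' => { head := r.head, bodyPos := r'.bodyPos ∪ r.bodyPos.erase a, bodyNeg := r'.bodyNeg ∪ r.bodyNeg }) with hQdef
  have key : ∀ n, ∀ t : DT α, sizeOf t < n → WfT Q t →
      ∃ t', WfT P t' ∧ DT.conc t' = DT.conc t ∧
        ∀ x, VulMem t' x → VulMem t x := by
    intro n
    induction n using Nat.strong_induction_on with
    | _ n ih =>
    intro t hsz hwf
    cases hwf with
    | node r'' ts hr'' hall hwit =>
      have hch : ∀ a' ∈ r''.bodyPos, ∃ t', WfT P t' ∧ DT.conc t' = a' ∧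
          ∀ x, VulMem t' x → VulMem (DT.node r'' ts) x := by
        intro a' ha'
        obtain ⟨t₀, ht₀, hc₀⟩ := hwit a' ha'
        obtain ⟨t', h1, h2, h3⟩ := ih (sizeOf (DT.node r'' ts)) hsz t₀
          (sizeOf_lt_node ht₀ _) (hall t₀ ht₀)
        exact ⟨t', h1, h2.trans hc₀, fun x hx => .there _ _ _ _ ht₀ (h3 x hx)⟩
      rw [hQdef] at hr''
      rcases Finset.mem_union.mp hr'' with hcase | hcase
      · obtain ⟨t', h1, h2, h3⟩ := buildDT (Finset.mem_of_mem_erase hcase) _ hch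
        exact ⟨t', h1, h2, fun x hx => (h3 x hx).elim (fun h => .here _ _ _ h) id⟩
      · obtain ⟨r₀, hr₀f, hres⟩ := Finset.mem_image.mp hcase
        obtain ⟨hr₀, hh₀⟩ := Finset.mem_filter.mp hr₀f
        -- inner tree deriving `a` via `r₀`
        have hchIn : ∀ a' ∈ r₀.bodyPos, ∃ t', WfT P t' ∧ DT.conc t' = a' ∧
            ∀ x, VulMem t' x → VulMem (DT.node r'' ts) x := by
          intro a' ha'
          refine hch a' ?_
          rw [← hres]
          exact Finset.mem_union_left _ ha'
        obtain ⟨u₀, hu1, hu2, hu3⟩ := buildDT hr₀ _ hchIn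
        have hu3' : ∀ x, VulMem u₀ x → VulMem (DT.node r'' ts) x := by
          intro x hx
          rcases hu3 x hx with h | h
          · refine .here _ _ _ ?_
            rw [← hres]
            exact Finset.mem_union_left _ h
          · exact h
        have hchOut : ∀ a' ∈ r.bodyPos, ∃ t', WfT P t' ∧ DT.conc t' = a' ∧
            ∀ x, VulMem t' x → VulMem (DT.node r'' ts) x := by
          intro a' ha'
          by_cases haa : a' = a
          · exact ⟨u₀, hu1, by rw [hu2, hh₀, haa], hu3'⟩
          · refine hch a' ?_
            rw [← hres]
            exact Finset.mem_union_right _ (Finset.mem_erase.mpr ⟨haa, ha'⟩)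
        obtain ⟨t', h1, h2, h3⟩ := buildDT hr _ hchOut
        refine ⟨t', h1, by rw [h2, DT.conc_node, ← hres], fun x hx => ?_⟩
        rcases h3 x hx with h | h
        · refine .here _ _ _ ?_
          rw [← hres]
          exact Finset.mem_union_right _ h
        · exact h
  intro t hwf
  obtain ⟨t', h1, h2, h3⟩ := key (sizeOf t + 1) t (by omega) hwf
  exact ⟨t', h1, h2, fun x hx => Or.inl (h3 x hx)⟩

theorem stmt18 (P₁ P₂ : NLP α) (h : StepUTPM P₁ P₂) :
    setafOf P₁ = setafOf P₂ := by
  rcases h with hU | hT | hP | hM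
  · obtain ⟨r, hr, a, ha, rfl⟩ := hU
    exact master (fun _ _ => not_false) (fun _ _ => not_false)
      (transUfwd hr ha) (transUbwd hr ha)
  · obtain ⟨r, hr, ht, rfl⟩ := hT
    exact master (fun _ _ => not_false) (fun _ _ => not_false)
      (transT ht) (transSubset (fun x hx => Finset.mem_of_mem_erase hx))
  · obtain ⟨r, hr, b, hb, hheads, rfl⟩ := hP
    refine master ?_ ?_ (transPfwd hr) (transPbwd hr)
    · exact fun r' h' => hheads r' h'
    · intro r'' h''
      rcases Finset.mem_insert.mp h'' with rfl | h''
      · exact hheads r hr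
      · exact hheads r'' (Finset.mem_of_mem_erase h'')
  · obtain ⟨r, hr, r', hr', hne, hh, hp, hn, rfl⟩ := hM
    exact master (fun _ _ => not_false) (fun _ _ => not_false)
      (transM hr' hne hh hp hn) (transSubset (fun x hx => Finset.mem_of_mem_erase hx))
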